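/- arXiv:0802.2626 — 3 statements merged into one kernel-verified Lean document; each statement's English description precedes it below -/
import Mathlib

section
/- Let N ≥ 1 and let U ⊆ ℝ^N be open. Let a, b, c : U → ℝ and μ¹, …, μ^N : U → ℝ be C¹ functions such that for every index i and every point of U one has ∂_i b = μ^i ∂_i a and ∂_i c = (a + (μ^i)²) ∂_i a. Let Ω ⊆ ℝ³ be open (coordinates x, y, t) and let R = (R¹, …, R^N) : Ω → U be C¹ with R^i_y = μ^i(R) R^i_x and R^i_t = (a(R) + (μ^i(R))²) R^i_x on Ω for every i. Then the functions A = a∘R, B = b∘R, C = c∘R satisfy on Ω the dispersionless KP system: A_y = B_x, A_t = C_x, B_t = C_y, and A_t − A·A_x − B_y = 0. -/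
/-!
By the chain rule every first derivative of `a ∘ R`, `b ∘ R`, `c ∘ R` is a sum over `i` of
`∂ᵢ(a, b, c)(R)` times the corresponding derivative of `Rⁱ`. Substituting `Rⁱ_y = μⁱ Rⁱ_x`,
`Rⁱ_t = (a + (μⁱ)²) Rⁱ_x`, `∂ᵢb = μⁱ ∂ᵢa` and `∂ᵢc = (a + (μⁱ)²) ∂ᵢa`, each of the four dKP
identities holds term by term; e.g. the `i`-th term of `A_t − A A_x − B_y` is
`∂ᵢa Rⁱ_x ((a + (μⁱ)²) − a − (μⁱ)²) = 0`.
-/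

/-- Partial derivative of `f : ℝⁿ → ℝ` in the `i`-th coordinate direction. -/
noncomputable def pd {n : ℕ} (i : Fin n) (f : (Fin n → ℝ) → ℝ) (x : Fin n → ℝ) : ℝ :=
  fderiv ℝ f x (Pi.single i 1)

theorem fderiv_apply_eq_sum_pd {n : ℕ} (f : (Fin n → ℝ) → ℝ) (x v : Fin n → ℝ) :
    fderiv ℝ f x v = ∑ i, v i * pd i f x := by
  conv_lhs => rw [← Finset.univ_sum_single v, map_sum]
  refine Finset.sum_congr rfl fun i _ => ?_
  rw [pd, ← smul_eq_mul, ← map_smul, ← Pi.single_smul', smul_eq_mul, mul_one]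

theorem pd_comp {n m : ℕ} {f : (Fin n → ℝ) → ℝ} {R : (Fin m → ℝ) → (Fin n → ℝ)}
    {X : Fin m → ℝ} (hf : DifferentiableAt ℝ f (R X)) (hR : DifferentiableAt ℝ R X)
    (k : Fin m) :
    pd k (f ∘ R) X = ∑ i, pd i f (R X) * pd k (fun Y => R Y i) X := by
  rw [pd, fderiv_comp X hf hR, ContinuousLinearMap.comp_apply, fderiv_apply_eq_sum_pd]
  refine Finset.sum_congr rfl fun i _ => ?_
  rw [mul_comm]
  unfold pd
  rw [fderiv_apply hR]
  rfl

/-- Coordinates on `ℝ³` are `x = 0`, `y = 1`, `t = 2`. -/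
theorem hydrodynamic_reductions_solve_dKP_general
    {N : ℕ} (U : Set (Fin N → ℝ)) (hU : IsOpen U)
    (a b c : (Fin N → ℝ) → ℝ) (μ : Fin N → (Fin N → ℝ) → ℝ)
    (ha : ContDiffOn ℝ 1 a U) (hb : ContDiffOn ℝ 1 b U) (hc : ContDiffOn ℝ 1 c U)
    (hba : ∀ i : Fin N, ∀ R ∈ U, pd i b R = μ i R * pd i a R)
    (hca : ∀ i : Fin N, ∀ R ∈ U, pd i c R = (a R + (μ i R) ^ 2) * pd i a R)
    (Ω : Set (Fin 3 → ℝ)) (hΩ : IsOpen Ω)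
    (R : (Fin 3 → ℝ) → (Fin N → ℝ)) (hR : ContDiffOn ℝ 1 R Ω)
    (hRU : ∀ X ∈ Ω, R X ∈ U)
    (hRy : ∀ i : Fin N, ∀ X ∈ Ω,
      pd 1 (fun Y => R Y i) X = μ i (R X) * pd 0 (fun Y => R Y i) X)
    (hRt : ∀ i : Fin N, ∀ X ∈ Ω,
      pd 2 (fun Y => R Y i) X = (a (R X) + (μ i (R X)) ^ 2) * pd 0 (fun Y => R Y i) X) :
    ∀ X ∈ Ω,
      pd 1 (a ∘ R) X = pd 0 (b ∘ R) X ∧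
      pd 2 (a ∘ R) X = pd 0 (c ∘ R) X ∧
      pd 2 (b ∘ R) X = pd 1 (c ∘ R) X ∧
      pd 2 (a ∘ R) X - a (R X) * pd 0 (a ∘ R) X - pd 1 (b ∘ R) X = 0 := by
  intro X hX
  have hRX : R X ∈ U := hRU X hX
  have hRd : DifferentiableAt ℝ R X :=
    (hR.differentiableOn one_ne_zero).differentiableAt (hΩ.mem_nhds hX)
  have hd {f : (Fin N → ℝ) → ℝ} (hf : ContDiffOn ℝ 1 f U) : DifferentiableAt ℝ f (R X) :=
    (hf.differentiableOn one_ne_zero).differentiableAt (hU.mem_nhds hRX)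
  simp only [pd_comp (hd ha) hRd, pd_comp (hd hb) hRd, pd_comp (hd hc) hRd, Finset.mul_sum,
    ← Finset.sum_sub_distrib]
  refine ⟨Finset.sum_congr rfl fun i _ => ?_, Finset.sum_congr rfl fun i _ => ?_,
    Finset.sum_congr rfl fun i _ => ?_, Finset.sum_eq_zero fun i _ => ?_⟩
  all_goals simp only [hRy i X hX, hRt i X hX, hba i (R X) hRX, hca i (R X) hRX]; ring

/-- The N-phase ansatz with characteristic speeds `λⁱ = a + (μⁱ)²` produces solutions of
the dispersionless KP system `A_y = B_x, A_t = C_x, B_t = C_y, A_t − A·A_x − B_y = 0`.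
Coordinates on `ℝ³` are `x = 0`, `y = 1`, `t = 2`. -/
theorem hydrodynamic_reductions_solve_dKP
    {N : ℕ} (hN : 1 ≤ N) (U : Set (Fin N → ℝ)) (hU : IsOpen U)
    (a b c : (Fin N → ℝ) → ℝ) (μ : Fin N → (Fin N → ℝ) → ℝ)
    (ha : ContDiffOn ℝ 1 a U) (hb : ContDiffOn ℝ 1 b U) (hc : ContDiffOn ℝ 1 c U)
    (hμ : ∀ i, ContDiffOn ℝ 1 (μ i) U)
    (hba : ∀ i : Fin N, ∀ R ∈ U, pd i b R = μ i R * pd i a R)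
    (hca : ∀ i : Fin N, ∀ R ∈ U, pd i c R = (a R + (μ i R) ^ 2) * pd i a R)
    (Ω : Set (Fin 3 → ℝ)) (hΩ : IsOpen Ω)
    (R : (Fin 3 → ℝ) → (Fin N → ℝ)) (hR : ContDiffOn ℝ 1 R Ω)
    (hRU : ∀ X ∈ Ω, R X ∈ U)
    (hRy : ∀ i : Fin N, ∀ X ∈ Ω,
      pd 1 (fun Y => R Y i) X = μ i (R X) * pd 0 (fun Y => R Y i) X)
    (hRt : ∀ i : Fin N, ∀ X ∈ Ω,
      pd 2 (fun Y => R Y i) X = (a (R X) + (μ i (R X)) ^ 2) * pd 0 (fun Y => R Y i) X) :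
    ∀ X ∈ Ω,
      pd 1 (a ∘ R) X = pd 0 (b ∘ R) X ∧
      pd 2 (a ∘ R) X = pd 0 (c ∘ R) X ∧
      pd 2 (b ∘ R) X = pd 1 (c ∘ R) X ∧
      pd 2 (a ∘ R) X - a (R X) * pd 0 (a ∘ R) X - pd 1 (b ∘ R) X = 0 :=
  hydrodynamic_reductions_solve_dKP_general U hU a b c μ ha hb hc hba hca Ω hΩ R hR hRU hRy hRt
end

section
/- Let a₁, a₂, a₃ ∈ ℝ with a₃ ≠ 0, set s = (a₁ + a₂)/a₃, let Ω ⊆ ℝ³ be open with coordinates (x, y, t), and let u : Ω → ℝ be a C² function with u_t > 0 on Ω satisfying the generalized dispersionless Hirota equation a₁ u_x u_{yt} + a₂ u_y u_{xt} + a₃ u_t u_{xy} = 0 on Ω. Then a₂ ∂_x( (u_t)^s · u_y ) + a₁ ∂_y( (u_t)^s · u_x ) = 0 on Ω, where (u_t)^s denotes the real power u_t^s. -/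
/- With `g = u_t`, the product and power rules give
`a₂ (g^s u_y)_x + a₁ (g^s u_x)_y = s g^(s-1) (a₂ u_y g_x + a₁ u_x g_y) + (a₁ + a₂) g^s u_xy`.
Since `a₁ + a₂ = s a₃` and `g^s = g^(s-1) g`, this is `s g^(s-1)` times the left-hand side of the
Hirota equation, once the mixed partials are known to commute. -/

section PartialDerivatives

variable {n : ℕ} {f g : (Fin n → ℝ) → ℝ} {x : Fin n → ℝ}

theorem ContDiffAt.differentiableAt_pd (hf : ContDiffAt ℝ 2 f x) (i : Fin n) :
    DifferentiableAt ℝ (pd i f) x :=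
  ((hf.fderiv_right (m := 1) le_rfl).differentiableAt one_ne_zero).clm_apply
    (differentiableAt_const _)

theorem pd_pd (hf : ContDiffAt ℝ 2 f x) (i j : Fin n) :
    pd i (pd j f) x = fderiv ℝ (fderiv ℝ f) x (Pi.single i 1) (Pi.single j 1) := by
  show fderiv ℝ (fun y => fderiv ℝ f y (Pi.single j 1)) x (Pi.single i 1) = _
  rw [fderiv_clm_apply ((hf.fderiv_right (m := 1) le_rfl).differentiableAt one_ne_zero)
    (differentiableAt_const _)]
  simp

theorem pd_comm (hf : ContDiffAt ℝ 2 f x) (i j : Fin n) :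
    pd i (pd j f) x = pd j (pd i f) x := by
  rw [pd_pd hf, pd_pd hf, (hf.isSymmSndFDerivAt (by simp)).eq]

theorem pd_mul (hf : DifferentiableAt ℝ f x) (hg : DifferentiableAt ℝ g x) (i : Fin n) :
    pd i (fun y => f y * g y) x = f x * pd i g x + g x * pd i f x := by
  simp [pd, fderiv_fun_mul hf hg]

theorem pd_rpow_const (hf : DifferentiableAt ℝ f x) (hfx : f x ≠ 0) (s : ℝ) (i : Fin n) :
    pd i (fun y => f y ^ s) x = s * f x ^ (s - 1) * pd i f x := by
  simp [pd, (hf.hasFDerivAt.rpow_const (p := s) (Or.inl hfx)).fderiv]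

end PartialDerivatives

/-- Every solution with `u_t > 0` of the generalized dispersionless Hirota equation
`a₁ u_x u_{yt} + a₂ u_y u_{xt} + a₃ u_t u_{xy} = 0` (with `a₃ ≠ 0`,
`s = (a₁+a₂)/a₃`) satisfies the conservation law
`a₂ ((u_t)^s u_y)_x + a₁ ((u_t)^s u_x)_y = 0`, where `(u_t)^s` is the real power.
Coordinates on `ℝ³` are `x = 0`, `y = 1`, `t = 2`. -/
theorem hirota_power_conservation_law
    (a1 a2 a3 : ℝ) (ha3 : a3 ≠ 0) (s : ℝ) (hs : s = (a1 + a2) / a3)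
    (Ω : Set (Fin 3 → ℝ)) (hΩ : IsOpen Ω)
    (u : (Fin 3 → ℝ) → ℝ) (hu : ContDiffOn ℝ 2 u Ω)
    (hut : ∀ X ∈ Ω, 0 < pd 2 u X)
    (heq : ∀ X ∈ Ω,
      a1 * pd 0 u X * pd 2 (pd 1 u) X
        + a2 * pd 1 u X * pd 2 (pd 0 u) X
        + a3 * pd 2 u X * pd 1 (pd 0 u) X = 0) :
    ∀ X ∈ Ω,
      a2 * pd 0 (fun Y => pd 2 u Y ^ s * pd 1 u Y) X
        + a1 * pd 1 (fun Y => pd 2 u Y ^ s * pd 0 u Y) X = 0 := by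
  intro X hX
  have hu2 : ContDiffAt ℝ 2 u X := hu.contDiffAt (hΩ.mem_nhds hX)
  have hg : 0 < pd 2 u X := hut X hX
  have hpd : ∀ i : Fin 3, DifferentiableAt ℝ (pd i u) X := hu2.differentiableAt_pd
  have hflux : ∀ i j : Fin 3, pd j (fun Y => pd 2 u Y ^ s * pd i u Y) X
      = pd 2 u X ^ s * pd j (pd i u) X + pd i u X * (s * pd 2 u X ^ (s - 1) * pd j (pd 2 u) X) :=
    fun i j => by
      rw [pd_mul ((hpd 2).rpow_const (Or.inl hg.ne')) (hpd i),
        pd_rpow_const (hpd 2) hg.ne']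
  have hpow : pd 2 u X ^ s = pd 2 u X ^ (s - 1) * pd 2 u X := by
    rw [← Real.rpow_add_one hg.ne', sub_add_cancel]
  have hsa3 : s * a3 = a1 + a2 := by rw [hs, div_mul_cancel₀ _ ha3]
  rw [hflux 1 0, hflux 0 1, pd_comm hu2 0 1, pd_comm hu2 0 2, pd_comm hu2 1 2, hpow]
  linear_combination (s * pd 2 u X ^ (s - 1)) * heq X hX
    - (pd 2 u X ^ (s - 1) * pd 2 u X * pd 1 (pd 0 u) X) * hsa3
end

section
/- Let Ω ⊆ ℝ³ be open with coordinates (x, y, t), and let u : Ω → ℝ be a C² function with u_y > 0 and u_t > 0 on Ω satisfying the dispersionless Toda singular manifold equation u_{xy} · (e^{u_t} − 1)(1 − e^{−u_t}) = u_x u_y u_{tt} on Ω. Then ∂_x ( log( u_y / (e^{u_t} − 1) ) ) + ∂_t ( u_x e^{u_t} / (e^{u_t} − 1) ) = 0 on Ω. -/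
theorem Real.exp_sub_one_ne_zero {t : ℝ} (ht : t ≠ 0) : Real.exp t - 1 ≠ 0 := by
  simpa [sub_eq_zero] using ht

section PartialDerivatives

variable {n : ℕ} {i j : Fin n} {x : Fin n → ℝ}

theorem HasFDerivAt.pd_eq {f : (Fin n → ℝ) → ℝ} {f' : (Fin n → ℝ) →L[ℝ] ℝ}
    (hf : HasFDerivAt f f' x) : pd i f x = f' (Pi.single i 1) := by
  rw [pd, hf.fderiv]

theorem hasFDerivAt_pd {u : (Fin n → ℝ) → ℝ} (hu : ContDiffAt ℝ 2 u x) :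
    HasFDerivAt (pd j u) ((fderiv ℝ (fderiv ℝ u) x).flip (Pi.single j 1)) x := by
  have hd : DifferentiableAt ℝ (fderiv ℝ u) x :=
    (hu.fderiv_right (by norm_num)).differentiableAt one_ne_zero
  exact (ContinuousLinearMap.apply ℝ ℝ (Pi.single j 1)).hasFDerivAt.comp x hd.hasFDerivAt

theorem pd_pd_comm {u : (Fin n → ℝ) → ℝ} (hu : ContDiffAt ℝ 2 u x) :
    pd i (pd j u) x = pd j (pd i u) x := by
  rw [(hasFDerivAt_pd hu).pd_eq, (hasFDerivAt_pd hu).pd_eq]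
  exact hu.isSymmSndFDerivAt minSmoothness_of_isRCLikeNormedField.le _ _

variable {a b c : (Fin n → ℝ) → ℝ}

theorem pd_log_div_exp_sub_one (hb : DifferentiableAt ℝ b x) (hc : DifferentiableAt ℝ c x)
    (hbx : b x ≠ 0) (hcx : c x ≠ 0) :
    pd i (fun y => Real.log (b y / (Real.exp (c y) - 1))) x
      = pd i b x / b x - Real.exp (c x) * pd i c x / (Real.exp (c x) - 1) := by
  have hq := Real.exp_sub_one_ne_zero hcx
  have hq' := (hasDerivAt_inv hq).comp_hasFDerivAt x (hc.hasFDerivAt.exp.sub_const 1)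
  have hderiv : HasFDerivAt (fun y => Real.log (b y * (Real.exp (c y) - 1)⁻¹)) _ x :=
    (hb.hasFDerivAt.fun_mul hq').log (mul_ne_zero hbx (inv_ne_zero hq))
  simp only [div_eq_mul_inv]
  rw [hderiv.pd_eq]
  simp only [Function.comp_apply, mul_inv_rev, inv_inv, neg_smul, smul_neg, smul_add, add_apply,
    neg_apply, smul_apply, smul_eq_mul, pd]
  field_simp
  ring

theorem pd_mul_exp_div_exp_sub_one (ha : DifferentiableAt ℝ a x) (hc : DifferentiableAt ℝ c x)
    (hcx : c x ≠ 0) :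
    pd i (fun y => a y * Real.exp (c y) / (Real.exp (c y) - 1)) x
      = Real.exp (c x) * pd i a x / (Real.exp (c x) - 1)
        - a x * Real.exp (c x) * pd i c x / (Real.exp (c x) - 1) ^ 2 := by
  have hq := Real.exp_sub_one_ne_zero hcx
  have hq' := (hasDerivAt_inv hq).comp_hasFDerivAt x (hc.hasFDerivAt.exp.sub_const 1)
  have hderiv : HasFDerivAt (fun y => a y * Real.exp (c y) * (Real.exp (c y) - 1)⁻¹) _ x :=
    (ha.hasFDerivAt.fun_mul hc.hasFDerivAt.exp).fun_mul hq'
  simp only [div_eq_mul_inv]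
  rw [hderiv.pd_eq]
  simp only [neg_smul, smul_neg, smul_add, add_apply, neg_apply, smul_apply, smul_eq_mul, pd]
  field_simp
  ring

end PartialDerivatives

/-- Every solution with `u_y > 0`, `u_t > 0` of the dispersionless Toda singular
manifold equation `u_{xy} (e^{u_t} − 1)(1 − e^{−u_t}) = u_x u_y u_{tt}` satisfies the
conservation law `(log(u_y/(e^{u_t} − 1)))_x + (u_x e^{u_t}/(e^{u_t} − 1))_t = 0`.
Coordinates on `ℝ³` are `x = 0`, `y = 1`, `t = 2`. -/
theorem dToda_conservation_law
    (Ω : Set (Fin 3 → ℝ)) (hΩ : IsOpen Ω)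
    (u : (Fin 3 → ℝ) → ℝ) (hu : ContDiffOn ℝ 2 u Ω)
    (huy : ∀ X ∈ Ω, 0 < pd 1 u X)
    (hut : ∀ X ∈ Ω, 0 < pd 2 u X)
    (heq : ∀ X ∈ Ω,
      pd 1 (pd 0 u) X * ((Real.exp (pd 2 u X) - 1) * (1 - Real.exp (-(pd 2 u X))))
        = pd 0 u X * pd 1 u X * pd 2 (pd 2 u) X) :
    ∀ X ∈ Ω,
      pd 0 (fun Y => Real.log (pd 1 u Y / (Real.exp (pd 2 u Y) - 1))) X
        + pd 2 (fun Y => pd 0 u Y * Real.exp (pd 2 u Y) / (Real.exp (pd 2 u Y) - 1)) X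
        = 0 := by
  intro X hX
  have hu2 : ContDiffAt ℝ 2 u X := hu.contDiffAt (hΩ.mem_nhds hX)
  have hd : ∀ j : Fin 3, DifferentiableAt ℝ (pd j u) X := fun _ =>
    (hasFDerivAt_pd hu2).differentiableAt
  have hb : pd 1 u X ≠ 0 := (huy X hX).ne'
  have hc : pd 2 u X ≠ 0 := (hut X hX).ne'
  have hq := Real.exp_sub_one_ne_zero hc
  rw [pd_log_div_exp_sub_one (hd 1) (hd 2) hb hc, pd_mul_exp_div_exp_sub_one (hd 0) (hd 2) hc,
    pd_pd_comm (i := 0) (j := 1) hu2, pd_pd_comm (i := 0) (j := 2) hu2]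
  have hpde := heq X hX
  rw [Real.exp_neg] at hpde
  field_simp
  field_simp at hpde
  linear_combination hpde
end
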